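/- arXiv:2604.09513 — 2 statements merged into one kernel-verified Lean document; each statement's English description precedes it below -/
import Mathlib

section
/- Let μ be a probability measure on a complete Riemannian manifold M of non-positive sectional curvature with Fréchet mean ȳ (a minimizer of y ↦ ∫ d(z,y)² dμ(z)). Then for every y ∈ M, ∫ d(z,y)² dμ(z) ≥ d(ȳ, y)² + ∫ d(z, ȳ)² dμ(z). -/
/-!
Write `F y = ∫ d(z,y)² dμ(z)`. Integrating the semiparallelogram inequality shows that the
midpoint `m` of `ȳ` and `y` satisfies `F m ≤ (F ȳ + F y)/2 - d(ȳ,y)²/4`, with `d(ȳ,m) ≥ d(ȳ,y)/2`.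
Hence a quadratic growth bound `c · d(ȳ,·)² ≤ F - F ȳ`, which holds for `c = 0` because `ȳ`
minimizes `F`, improves to the constant `(c + 1)/2`; iterating drives the constant to `1`.
-/

open MeasureTheory Filter Topology

section Midpoint

variable {M : Type*} [MetricSpace M]

def IsSemiparallelogramMidpoint (x y m : M) : Prop :=
  ∀ z : M, dist z m ^ 2 ≤ (dist z x ^ 2 + dist z y ^ 2) / 2 - dist x y ^ 2 / 4

namespace IsSemiparallelogramMidpoint

variable {x y m : M}

theorem dist_right_le (h : IsSemiparallelogramMidpoint x y m) : dist y m ≤ dist x y / 2 := by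
  have hy := h y
  rw [dist_self, dist_comm y x] at hy
  exact (pow_le_pow_iff_left₀ dist_nonneg (by positivity) two_ne_zero).mp (by linarith)

theorem half_dist_le_dist_left (h : IsSemiparallelogramMidpoint x y m) :
    dist x y / 2 ≤ dist x m := by
  linarith [dist_triangle x m y, dist_comm m y, h.dist_right_le]

end IsSemiparallelogramMidpoint

end Midpoint

section QuadraticGrowth

variable {M : Type*} [MetricSpace M] {F : M → ℝ} {ybar : M}

theorem quadratic_growth_improve
    (hF : ∀ y, ∃ m, dist ybar y / 2 ≤ dist ybar m ∧
      F m ≤ (F ybar + F y) / 2 - dist ybar y ^ 2 / 4)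
    {c : ℝ} (hc₀ : 0 ≤ c) (hc : ∀ y, c * dist ybar y ^ 2 ≤ F y - F ybar) (y : M) :
    (c + 1) / 2 * dist ybar y ^ 2 ≤ F y - F ybar := by
  obtain ⟨m, hdist, hm⟩ := hF y
  have hsq : (dist ybar y / 2) ^ 2 ≤ dist ybar m ^ 2 := by gcongr
  nlinarith [hc m, mul_le_mul_of_nonneg_left hsq hc₀]

theorem dist_sq_add_le_of_forall_le
    (hF : ∀ y, ∃ m, dist ybar y / 2 ≤ dist ybar m ∧
      F m ≤ (F ybar + F y) / 2 - dist ybar y ^ 2 / 4)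
    (hmin : ∀ y, F ybar ≤ F y) (y : M) :
    dist ybar y ^ 2 + F ybar ≤ F y := by
  have hgrowth :
      ∀ n : ℕ, ∀ y, (1 - (1 / 2 : ℝ) ^ n) * dist ybar y ^ 2 ≤ F y - F ybar := by
    intro n
    induction n with
    | zero => simpa using hmin
    | succ n ih =>
      have hc₀ : 0 ≤ 1 - (1 / 2 : ℝ) ^ n :=
        sub_nonneg.2 (pow_le_one₀ (by norm_num) (by norm_num))
      intro y
      convert quadratic_growth_improve hF hc₀ ih y using 2
      ring
  have hlim : Tendsto (fun n : ℕ => (1 - (1 / 2 : ℝ) ^ n) * dist ybar y ^ 2) atTop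
      (𝓝 ((1 - 0) * dist ybar y ^ 2)) :=
    ((tendsto_pow_atTop_nhds_zero_of_lt_one (by norm_num) (by norm_num)).const_sub 1).mul_const _
  have := le_of_tendsto' hlim (hgrowth · y)
  linarith

end QuadraticGrowth

section Integral

variable {M : Type*} [MetricSpace M] [MeasurableSpace M] {μ : Measure M} [IsProbabilityMeasure μ]

theorem IsSemiparallelogramMidpoint.integral_dist_sq_le {x y m : M}
    (h : IsSemiparallelogramMidpoint x y m)
    (hint : ∀ p : M, Integrable (fun z => dist z p ^ 2) μ) :
    ∫ z, dist z m ^ 2 ∂μ ≤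
      (∫ z, dist z x ^ 2 ∂μ + ∫ z, dist z y ^ 2 ∂μ) / 2 - dist x y ^ 2 / 4 := by
  have hxy : Integrable (fun z => dist z x ^ 2 + dist z y ^ 2) μ := (hint x).add (hint y)
  calc ∫ z, dist z m ^ 2 ∂μ
      ≤ ∫ z, ((dist z x ^ 2 + dist z y ^ 2) / 2 - dist x y ^ 2 / 4) ∂μ :=
        integral_mono (hint m) ((hxy.div_const 2).sub (integrable_const _)) h
    _ = (∫ z, dist z x ^ 2 ∂μ + ∫ z, dist z y ^ 2 ∂μ) / 2 - dist x y ^ 2 / 4 := by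
        rw [integral_sub (hxy.div_const 2) (integrable_const _), integral_div,
          integral_add (hint x) (hint y), integral_const, probReal_univ, one_smul]

end Integral

theorem stmt_4_general {M : Type*} [MetricSpace M] [MeasurableSpace M]
    (npc : ∀ x y : M, ∃ mid : M, ∀ z : M,
      dist z mid ^ 2 ≤ (dist z x ^ 2 + dist z y ^ 2) / 2 - dist x y ^ 2 / 4)
    (μ : Measure M) [IsProbabilityMeasure μ]
    (hint : ∀ y : M, Integrable (fun z => dist z y ^ 2) μ)
    (ybar : M)
    (hmin : ∀ y : M, ∫ z, dist z ybar ^ 2 ∂μ ≤ ∫ z, dist z y ^ 2 ∂μ) :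
    ∀ y : M, dist ybar y ^ 2 + ∫ z, dist z ybar ^ 2 ∂μ ≤ ∫ z, dist z y ^ 2 ∂μ := by
  refine dist_sq_add_le_of_forall_le (F := fun p => ∫ z, dist z p ^ 2 ∂μ) (fun y => ?_) hmin
  obtain ⟨m, hm⟩ : ∃ m, IsSemiparallelogramMidpoint ybar y m := npc ybar y
  exact ⟨m, hm.half_dist_le_dist_left, hm.integral_dist_sq_le hint⟩

/-- NPC (Sturm) variance inequality: on a metric space satisfying the semiparallelogram
law (non-positive curvature), if `ybar` is a Fréchet mean of the probability measure `μ`,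
then `∫ d(z,y)² dμ(z) ≥ d(ybar,y)² + ∫ d(z,ybar)² dμ(z)` for every `y`. -/
theorem stmt_4 {M : Type*} [MetricSpace M] [MeasurableSpace M] [BorelSpace M]
    (npc : ∀ x y : M, ∃ mid : M, ∀ z : M,
      dist z mid ^ 2 ≤ (dist z x ^ 2 + dist z y ^ 2) / 2 - dist x y ^ 2 / 4)
    (μ : Measure M) [IsProbabilityMeasure μ]
    (hint : ∀ y : M, Integrable (fun z => dist z y ^ 2) μ)
    (ybar : M)
    (hmin : ∀ y : M, ∫ z, dist z ybar ^ 2 ∂μ ≤ ∫ z, dist z y ^ 2 ∂μ) :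
    ∀ y : M, dist ybar y ^ 2 + ∫ z, dist z ybar ^ 2 ∂μ ≤ ∫ z, dist z y ^ 2 ∂μ :=
  stmt_4_general npc μ hint ybar hmin
end

section
/- The penalized regression problem min_F R_n(F) + λ ∫₀¹|F'|² over H^1([0,1], M) with R_n depending only on the values F(t₍₁₎),…,F(t₍ₙ₎), has the same optimal value as the finite-dimensional problem min over (f₁,…,fₙ) ∈ Mⁿ of R_n(f₁,…,fₙ) + λ Σᵢ d(fᵢ, fᵢ₊₁)²/Δᵢ. -/
open MeasureTheory Set
open scoped Function

/-!
If `v` is an upper gradient of `F`, then on each `[tᵢ, tᵢ₊₁]` the Cauchy–Schwarz inequality gives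
`d(F tᵢ, F tᵢ₊₁)² ≤ (∫ v)² ≤ Δᵢ ∫ v²`, so the energy of `F` dominates the discrete energy of its
nodal values. Conversely, for nodal values `g`, the concatenation of constant-speed geodesics
between consecutive nodes (constant outside `[t₀, tₙ]`) has the piecewise-constant speed
`d(gᵢ, gᵢ₊₁)/Δᵢ` as an upper gradient, and its energy equals the discrete energy of `g`. As `R`
only sees nodal values, each value of either problem is bounded below by a value of the other, so
the infima agree.
-/

theorem sq_setIntegral_le_measureReal_mul_setIntegral_sq {α : Type*} [MeasurableSpace α]
    {μ : Measure α} {s : Set α} {v : α → ℝ} (hs : μ s ≠ ⊤)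
    (hv2 : IntegrableOn (fun x => v x ^ 2) s μ) :
    (∫ x in s, v x ∂μ) ^ 2 ≤ μ.real s * ∫ x in s, v x ^ 2 ∂μ := by
  have hJ : 0 ≤ ∫ x in s, v x ^ 2 ∂μ := integral_nonneg fun x => sq_nonneg (v x)
  by_cases hs0 : μ s = 0
  · simp [Measure.restrict_eq_zero.mpr hs0]
  by_cases hv : IntegrableOn v s μ
  swap
  · rw [integral_undef hv]
    simpa using mul_nonneg measureReal_nonneg hJ
  have hμ : 0 < μ.real s := ENNReal.toReal_pos hs0 hs
  have jensen := (even_two.convexOn_pow (𝕜 := ℝ)).map_set_average_le (continuousOn_pow 2)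
    isClosed_univ hs0 hs (by simp) hv hv2
  simp only [setAverage_eq, smul_eq_mul, mul_pow] at jensen
  rw [← mul_le_mul_iff_right₀ (pow_pos (inv_pos.mpr hμ) 2)]
  calc (μ.real s)⁻¹ ^ 2 * (∫ x in s, v x ∂μ) ^ 2 ≤ (μ.real s)⁻¹ * ∫ x in s, v x ^ 2 ∂μ := jensen
    _ = _ := by field_simp

theorem Monotone.pairwise_disjoint_on_Ioc_castSucc_succ {n : ℕ} {t : Fin (n + 1) → ℝ}
    (ht : Monotone t) : Pairwise (Disjoint on fun i : Fin n => Ioc (t i.castSucc) (t i.succ)) := by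
  intro i j hij
  simpa only [Function.onFun, Fin.orderSucc_castSucc] using
    ht.pairwise_disjoint_on_Ioc_succ ((Fin.castSucc_injective n).ne hij)

theorem Monotone.Ioc_castSucc_succ_subset {n : ℕ} {t : Fin (n + 1) → ℝ} (ht : Monotone t)
    (i : Fin n) : Ioc (t i.castSucc) (t i.succ) ⊆ Ioc (t 0) (t (Fin.last n)) :=
  Ioc_subset_Ioc (ht (Fin.zero_le _)) (ht (Fin.le_last _))

section Indicator
variable {ι α β : Type*} [Fintype ι] [AddCommMonoid β] {s : ι → Set α}

theorem sum_indicator_apply_of_mem (hs : Pairwise (Disjoint on s)) (f : ι → α → β) {i : ι}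
    {x : α} (hx : x ∈ s i) : ∑ j, (s j).indicator (f j) x = f i x := by
  rw [Finset.sum_eq_single_of_mem i (Finset.mem_univ i), indicator_of_mem hx]
  exact fun j _ hji => indicator_of_notMem (fun hxj => (hs hji).notMem_of_mem_left hxj hx) _

theorem sq_sum_indicator_apply (hs : Pairwise (Disjoint on s)) (f : ι → α → ℝ) (x : α) :
    (∑ j, (s j).indicator (f j) x) ^ 2 = ∑ j, (s j).indicator (fun y => f j y ^ 2) x := by
  by_cases hx : ∃ i, x ∈ s i
  · obtain ⟨i, hi⟩ := hx
    rw [sum_indicator_apply_of_mem hs _ hi, sum_indicator_apply_of_mem hs _ hi]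
  · push Not at hx
    simp [indicator_of_notMem (hx _)]

end Indicator

def HasUpperGradientOn {M : Type*} [PseudoMetricSpace M] (F : ℝ → M) (v : ℝ → ℝ) (a b : ℝ) :
    Prop :=
  ∀ s u, a ≤ s → s ≤ u → u ≤ b → dist (F s) (F u) ≤ ∫ x in Ioc s u, v x

namespace HasUpperGradientOn

variable {M : Type*} [PseudoMetricSpace M] {F : ℝ → M} {v : ℝ → ℝ} {a b m : ℝ}

theorem of_forall_eq (hF : ∀ x ∈ Icc a b, F x = F a) (hv : ∀ x, 0 ≤ v x) :
    HasUpperGradientOn F v a b := fun s u has hsu hub => by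
  rw [hF s ⟨has, hsu.trans hub⟩, hF u ⟨has.trans hsu, hub⟩, dist_self]
  exact integral_nonneg hv

theorem of_constSpeed {γ : ℝ → M} {L : ℝ} (hab : a < b)
    (hγ : ∀ s u, dist (γ s) (γ u) = |s - u| * L)
    (hF : ∀ x ∈ Icc a b, F x = γ ((x - a) / (b - a))) (hv : ∀ x ∈ Ioc a b, v x = L / (b - a)) :
    HasUpperGradientOn F v a b := fun s u has hsu hub => by
  have hΔ : 0 < b - a := sub_pos.mpr hab
  rw [hF s ⟨has, hsu.trans hub⟩, hF u ⟨has.trans hsu, hub⟩, hγ,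
    setIntegral_congr_fun measurableSet_Ioc fun x hx => hv x (Ioc_subset_Ioc has hub hx),
    setIntegral_const, Real.volume_real_Ioc_of_le hsu, smul_eq_mul, abs_of_nonpos (by
      rw [div_sub_div_same]; exact div_nonpos_of_nonpos_of_nonneg (by linarith) hΔ.le)]
  apply le_of_eq
  field_simp
  ring

theorem refl (F : ℝ → M) (v : ℝ → ℝ) (a : ℝ) : HasUpperGradientOn F v a a :=
  fun s u has hsu hua => by
    obtain rfl : s = u := le_antisymm hsu (hua.trans has)
    simp

theorem trans (h₁ : HasUpperGradientOn F v a m) (h₂ : HasUpperGradientOn F v m b)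
    (hv : IntegrableOn v (Ioc a b)) : HasUpperGradientOn F v a b := by
  intro s u has hsu hub
  rcases le_total u m with hum | hmu
  · exact h₁ s u has hsu hum
  rcases le_total m s with hms | hsm
  · exact h₂ s u hms hsu hub
  have hint : IntegrableOn v (Ioc s u) := hv.mono_set (Ioc_subset_Ioc has hub)
  calc dist (F s) (F u) ≤ dist (F s) (F m) + dist (F m) (F u) := dist_triangle _ _ _
    _ ≤ (∫ x in Ioc s m, v x) + ∫ x in Ioc m u, v x :=
      add_le_add (h₁ s m has hsm le_rfl) (h₂ m u le_rfl hmu hub)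
    _ = ∫ x in Ioc s u, v x := by
      rw [← setIntegral_union (Ioc_disjoint_Ioc_of_le le_rfl) measurableSet_Ioc
        (hint.mono_set (Ioc_subset_Ioc_right hmu)) (hint.mono_set (Ioc_subset_Ioc_left hsm)),
        Ioc_union_Ioc_eq_Ioc hsm hmu]

theorem of_partition {n : ℕ} {t : Fin (n + 1) → ℝ} (ht : Monotone t)
    (hv : IntegrableOn v (Ioc (t 0) (t (Fin.last n))))
    (hF : ∀ i : Fin n, HasUpperGradientOn F v (t i.castSucc) (t i.succ)) :
    HasUpperGradientOn F v (t 0) (t (Fin.last n)) := by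
  induction n with
  | zero => exact refl F v _
  | succ n ih =>
    have hinit : HasUpperGradientOn F v (t 0) (t (Fin.last n).castSucc) := by
      refine ih (t := t ∘ Fin.castSucc) (ht.comp Fin.strictMono_castSucc.monotone)
        (hv.mono_set (Ioc_subset_Ioc_right (ht (Fin.le_last _)))) fun i => ?_
      simpa only [Function.comp_apply, Fin.succ_castSucc] using hF i.castSucc
    simpa only [Fin.succ_last] using hinit.trans (hF (Fin.last n)) (by rwa [Fin.succ_last])

theorem sq_dist_div_le (hF : HasUpperGradientOn F v a b) (hab : a < b)
    (hv2 : IntegrableOn (fun x => v x ^ 2) (Ioc a b)) :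
    dist (F a) (F b) ^ 2 / (b - a) ≤ ∫ x in Ioc a b, v x ^ 2 := by
  have hΔ : 0 < b - a := sub_pos.mpr hab
  rw [div_le_iff₀' hΔ]
  calc dist (F a) (F b) ^ 2 ≤ (∫ x in Ioc a b, v x) ^ 2 :=
        pow_le_pow_left₀ dist_nonneg (hF a b le_rfl hab.le le_rfl) 2
    _ ≤ volume.real (Ioc a b) * ∫ x in Ioc a b, v x ^ 2 :=
        sq_setIntegral_le_measureReal_mul_setIntegral_sq measure_Ioc_lt_top.ne hv2
    _ = (b - a) * ∫ x in Ioc a b, v x ^ 2 := by rw [Real.volume_real_Ioc_of_le hab.le]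

theorem sum_sq_dist_div_le {n : ℕ} {t : Fin (n + 1) → ℝ} (hF : HasUpperGradientOn F v a b)
    (ht : StrictMono t) (ha : a ≤ t 0) (hb : t (Fin.last n) ≤ b)
    (hv2 : IntegrableOn (fun x => v x ^ 2) (Ioc a b)) :
    ∑ i : Fin n, dist (F (t i.castSucc)) (F (t i.succ)) ^ 2 / (t i.succ - t i.castSucc) ≤
      ∫ x in Ioc a b, v x ^ 2 := by
  have hsub (i : Fin n) : Ioc (t i.castSucc) (t i.succ) ⊆ Ioc a b :=
    (ht.monotone.Ioc_castSucc_succ_subset i).trans (Ioc_subset_Ioc ha hb)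
  calc _ ≤ ∑ i : Fin n, ∫ x in Ioc (t i.castSucc) (t i.succ), v x ^ 2 := by
        refine Finset.sum_le_sum fun i _ => sq_dist_div_le (fun s u hs hsu hu => ?_)
          (ht Fin.castSucc_lt_succ) (hv2.mono_set (hsub i))
        exact hF s u (ha.trans ((ht.monotone (Fin.zero_le _)).trans hs)) hsu
          (hu.trans ((ht.monotone (Fin.le_last _)).trans hb))
    _ = ∫ x in ⋃ i : Fin n, Ioc (t i.castSucc) (t i.succ), v x ^ 2 :=
        (integral_iUnion_fintype (fun _ => measurableSet_Ioc)
          ht.monotone.pairwise_disjoint_on_Ioc_castSucc_succ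
          fun i => hv2.mono_set (hsub i)).symm
    _ ≤ ∫ x in Ioc a b, v x ^ 2 :=
        setIntegral_mono_set hv2 (Filter.Eventually.of_forall fun x => sq_nonneg (v x))
          (iUnion_subset hsub).eventuallyLE

end HasUpperGradientOn

section ConcatCurve

variable {M : Type*} {n : ℕ} {t : Fin (n + 1) → ℝ} {g : Fin (n + 1) → M}
  {γ : Fin n → ℝ → M} {x : ℝ}

variable (t g γ) in
noncomputable def concatCurve (x : ℝ) : M :=
  if h : ∃ i : Fin n, x ∈ Ioc (t i.castSucc) (t i.succ) then
    γ h.choose ((x - t h.choose.castSucc) / (t h.choose.succ - t h.choose.castSucc))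
  else if x ≤ t 0 then g 0 else g (Fin.last n)

theorem concatCurve_of_mem_Ioc (ht : Monotone t) {i : Fin n}
    (hx : x ∈ Ioc (t i.castSucc) (t i.succ)) :
    concatCurve t g γ x = γ i ((x - t i.castSucc) / (t i.succ - t i.castSucc)) := by
  have h : ∃ j : Fin n, x ∈ Ioc (t j.castSucc) (t j.succ) := ⟨i, hx⟩
  obtain rfl : h.choose = i := by
    by_contra hne
    exact (ht.pairwise_disjoint_on_Ioc_castSucc_succ hne).notMem_of_mem_left h.choose_spec hx
  rw [concatCurve, dif_pos h]

theorem concatCurve_of_le (ht : Monotone t) (hx : x ≤ t 0) : concatCurve t g γ x = g 0 := by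
  have h : ¬∃ i : Fin n, x ∈ Ioc (t i.castSucc) (t i.succ) := fun ⟨i, hi⟩ =>
    (hx.trans (ht (Fin.zero_le _))).not_gt hi.1
  rw [concatCurve, dif_neg h, if_pos hx]

theorem concatCurve_apply (ht : StrictMono t) (hγ : ∀ i, γ i 1 = g i.succ) (j : Fin (n + 1)) :
    concatCurve t g γ (t j) = g j := by
  induction j using Fin.cases with
  | zero => exact concatCurve_of_le ht.monotone le_rfl
  | succ i =>
    rw [concatCurve_of_mem_Ioc ht.monotone ⟨ht Fin.castSucc_lt_succ, le_rfl⟩,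
      div_self (sub_pos.mpr (ht Fin.castSucc_lt_succ)).ne', hγ]

theorem concatCurve_of_last_le (ht : StrictMono t) (hγ : ∀ i, γ i 1 = g i.succ)
    (hx : t (Fin.last n) ≤ x) : concatCurve t g γ x = g (Fin.last n) := by
  rcases hx.eq_or_lt with rfl | hx
  · exact concatCurve_apply ht hγ _
  have h : ¬∃ i : Fin n, x ∈ Ioc (t i.castSucc) (t i.succ) := fun ⟨i, hi⟩ =>
    (hi.2.trans (ht.monotone (Fin.le_last _))).not_gt hx
  rw [concatCurve, dif_neg h, if_neg ((ht.monotone (Fin.zero_le _)).trans_lt hx).not_ge]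

theorem concatCurve_of_mem_Icc (ht : StrictMono t) (hγ₀ : ∀ i, γ i 0 = g i.castSucc)
    (hγ₁ : ∀ i, γ i 1 = g i.succ) {i : Fin n} (hx : x ∈ Icc (t i.castSucc) (t i.succ)) :
    concatCurve t g γ x = γ i ((x - t i.castSucc) / (t i.succ - t i.castSucc)) := by
  rcases hx.1.eq_or_lt with rfl | hlt
  · rw [concatCurve_apply ht hγ₁, sub_self, zero_div, hγ₀]
  · exact concatCurve_of_mem_Ioc ht.monotone ⟨hlt, hx.2⟩

end ConcatCurve

section NodalSpeed

variable {M : Type*} [PseudoMetricSpace M] {n : ℕ} {t : Fin (n + 1) → ℝ} {g : Fin (n + 1) → M}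
  {x : ℝ}

variable (t g) in
noncomputable def nodalSpeed (x : ℝ) : ℝ :=
  ∑ i : Fin n, (Ioc (t i.castSucc) (t i.succ)).indicator
    (fun _ => dist (g i.castSucc) (g i.succ) / (t i.succ - t i.castSucc)) x

theorem nodalSpeed_of_mem_Ioc (ht : Monotone t) {i : Fin n}
    (hx : x ∈ Ioc (t i.castSucc) (t i.succ)) :
    nodalSpeed t g x = dist (g i.castSucc) (g i.succ) / (t i.succ - t i.castSucc) :=
  sum_indicator_apply_of_mem ht.pairwise_disjoint_on_Ioc_castSucc_succ _ hx

theorem nodalSpeed_nonneg (ht : Monotone t) (x : ℝ) : 0 ≤ nodalSpeed t g x :=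
  Finset.sum_nonneg fun i _ => indicator_nonneg
    (fun _ _ => div_nonneg dist_nonneg (sub_nonneg.mpr (ht (Fin.castSucc_le_succ i)))) x

theorem integrable_indicator_Ioc_const (a b c : ℝ) :
    Integrable ((Ioc a b).indicator fun _ : ℝ => c) :=
  (integrable_indicator_iff measurableSet_Ioc).mpr (integrableOn_const measure_Ioc_lt_top.ne)

theorem integrable_nodalSpeed : Integrable (nodalSpeed t g) :=
  integrable_finsetSum _ fun _ _ => integrable_indicator_Ioc_const _ _ _

theorem nodalSpeed_sq (ht : Monotone t) :
    (fun x => nodalSpeed t g x ^ 2) = fun x => ∑ i : Fin n,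
      (Ioc (t i.castSucc) (t i.succ)).indicator
        (fun _ => (dist (g i.castSucc) (g i.succ) / (t i.succ - t i.castSucc)) ^ 2) x :=
  funext <| sq_sum_indicator_apply ht.pairwise_disjoint_on_Ioc_castSucc_succ _

theorem integrable_nodalSpeed_sq (ht : Monotone t) : Integrable fun x => nodalSpeed t g x ^ 2 := by
  rw [nodalSpeed_sq ht]
  exact integrable_finsetSum _ fun _ _ => integrable_indicator_Ioc_const _ _ _

theorem setIntegral_nodalSpeed_sq (ht : StrictMono t) {a b : ℝ} (ha : a ≤ t 0)
    (hb : t (Fin.last n) ≤ b) :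
    ∫ x in Ioc a b, nodalSpeed t g x ^ 2 =
      ∑ i : Fin n, dist (g i.castSucc) (g i.succ) ^ 2 / (t i.succ - t i.castSucc) := by
  rw [nodalSpeed_sq ht.monotone,
    integral_finsetSum _ fun _ _ => (integrable_indicator_Ioc_const _ _ _).integrableOn]
  refine Finset.sum_congr rfl fun i _ => ?_
  have hΔ : 0 < t i.succ - t i.castSucc := sub_pos.mpr (ht Fin.castSucc_lt_succ)
  rw [setIntegral_indicator measurableSet_Ioc, inter_eq_self_of_subset_right
    ((ht.monotone.Ioc_castSucc_succ_subset i).trans (Ioc_subset_Ioc ha hb)), setIntegral_const,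
    Real.volume_real_Ioc_of_le (ht Fin.castSucc_lt_succ).le, smul_eq_mul]
  field_simp

theorem hasUpperGradientOn_concatCurve (ht : StrictMono t) {γ : Fin n → ℝ → M}
    (hγ₀ : ∀ i, γ i 0 = g i.castSucc) (hγ₁ : ∀ i, γ i 1 = g i.succ)
    (hγ : ∀ i s u, dist (γ i s) (γ i u) = |s - u| * dist (g i.castSucc) (g i.succ)) {a b : ℝ}
    (ha : a ≤ t 0) :
    HasUpperGradientOn (concatCurve t g γ) (nodalSpeed t g) a b := by
  have hv : IntegrableOn (nodalSpeed t g) (Ioc a b) := integrable_nodalSpeed.integrableOn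
  have hleft : HasUpperGradientOn (concatCurve t g γ) (nodalSpeed t g) a (t 0) :=
    .of_forall_eq (fun x hx => by rw [concatCurve_of_le ht.monotone hx.2,
      concatCurve_of_le ht.monotone ha]) (nodalSpeed_nonneg ht.monotone)
  have hmid : HasUpperGradientOn (concatCurve t g γ) (nodalSpeed t g) (t 0) (t (Fin.last n)) :=
    .of_partition ht.monotone integrable_nodalSpeed.integrableOn fun i =>
      .of_constSpeed (ht Fin.castSucc_lt_succ) (hγ i)
        (fun _ hx => concatCurve_of_mem_Icc ht hγ₀ hγ₁ hx)
        (fun _ hx => nodalSpeed_of_mem_Ioc ht.monotone hx)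
  have hright : HasUpperGradientOn (concatCurve t g γ) (nodalSpeed t g) (t (Fin.last n)) b :=
    .of_forall_eq (fun x hx => by rw [concatCurve_of_last_le ht hγ₁ hx.1,
      concatCurve_of_last_le ht hγ₁ le_rfl]) (nodalSpeed_nonneg ht.monotone)
  exact hleft.trans (hmid.trans hright (hv.mono_set (Ioc_subset_Ioc_left
    ((ht.monotone (Fin.zero_le _)).trans' ha)))) hv

end NodalSpeed

/-- Exact finite-dimensional reduction: the penalized regression problem
`min_F R_n(F) + λ∫|F'|²` over H¹ curves (with speed modeled by upper gradients `v`),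
where `R_n` depends only on the nodal values `F(t i)`, has the same optimal value as
the finite-dimensional problem `min_{g ∈ Mⁿ} R_n(g) + λ Σ d(gᵢ,gᵢ₊₁)²/Δᵢ`. -/
theorem stmt_7 {M : Type*} [MetricSpace M] (n : ℕ)
    (t : Fin (n + 1) → ℝ) (hmono : StrictMono t) (h0 : 0 ≤ t 0) (h1 : t (Fin.last n) ≤ 1)
    (R : (Fin (n + 1) → M) → ℝ) (lam : ℝ) (hlam : 0 ≤ lam)
    (hgeo : ∀ x y : M, ∃ γ : ℝ → M, γ 0 = x ∧ γ 1 = y ∧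
      ∀ s u : ℝ, dist (γ s) (γ u) = |s - u| * dist x y) :
    sInf {c : ℝ | ∃ (F : ℝ → M) (v : ℝ → ℝ), (∀ u, 0 ≤ v u) ∧
        (∀ s u : ℝ, 0 ≤ s → s ≤ u → u ≤ 1 → dist (F s) (F u) ≤ ∫ x in Ioc s u, v x) ∧
        IntegrableOn (fun u => (v u) ^ 2) (Ioc 0 1) ∧
        c = R (fun i => F (t i)) + lam * ∫ u in Ioc (0:ℝ) 1, (v u) ^ 2} =
    sInf {c : ℝ | ∃ g : Fin (n + 1) → M,
        c = R g + lam * ∑ i : Fin n,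
          dist (g i.castSucc) (g i.succ) ^ 2 / (t i.succ - t i.castSucc)} := by
  apply csInf_eq_csInf_of_forall_exists_le
  · rintro _ ⟨F, v, -, hF, hv, rfl⟩
    refine ⟨_, ⟨fun i => F (t i), rfl⟩, ?_⟩
    gcongr
    exact HasUpperGradientOn.sum_sq_dist_div_le hF hmono h0 h1 hv
  · rintro _ ⟨g, rfl⟩
    choose γ hγ₀ hγ₁ hγ using fun i : Fin n => hgeo (g i.castSucc) (g i.succ)
    refine ⟨_, ⟨concatCurve t g γ, nodalSpeed t g, nodalSpeed_nonneg hmono.monotone,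
      hasUpperGradientOn_concatCurve hmono hγ₀ hγ₁ hγ h0,
      (integrable_nodalSpeed_sq hmono.monotone).integrableOn, rfl⟩, ?_⟩
    simp only [concatCurve_apply hmono hγ₁, setIntegral_nodalSpeed_sq hmono h0 h1, le_rfl]
end
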